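/- arXiv:2203.10310 — 2 statements merged into one kernel-verified Lean document; each statement's English description precedes it below -/
import Mathlib

section
/- Let {X, H, Y} be an sl_2(ℝ)-triple in su(V, ⟨·,·⟩) where ⟨·,·⟩ is a nondegenerate ε-σ Hermitian form on a vector space V over D ∈ {ℝ, ℂ, ℍ}. For d ≥ 1 define (u, v)_d := ⟨u, X^{d-1} v⟩ on L(d-1). Then (·,·)_d is ε·(-1)^{d-1}-Hermitian: (v,u)_d = ε(-1)^{d-1} σ((u,v)_d). In particular if ⟨·,·⟩ is symmetric then (·,·)_d is symmetric for d odd and skew-symmetric (symplectic) for d even. -/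
/-- Let `{X, H, Y}` be an `sl₂(ℝ)`-triple in `su(V, ⟨·,·⟩)`, where `⟨·,·⟩` is a nondegenerate
`ε`-`σ` Hermitian form with values in the ℝ-algebra `D` (e.g. `D ∈ {ℝ, ℂ, ℍ}`), so that
`⟨v,u⟩ = ε σ(⟨u,v⟩)` and `X, H, Y` are skew for the form.  For `d ≥ 1` and `u, v ∈ L(d-1)`
(so `Y u = 0`, `H u = (1-d) u` and likewise for `v`), the form `(u,v)_d := ⟨u, X^{d-1} v⟩`
satisfies `(v,u)_d = ε (-1)^{d-1} σ((u,v)_d)`, i.e. it is `ε·(-1)^{d-1}`-Hermitian. -/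
theorem stmt15 {V D : Type*} [AddCommGroup V] [Module ℝ V] [Ring D] [Algebra ℝ D]
    (σ : D →ₗ[ℝ] D) (hσinv : ∀ x, σ (σ x) = x) (hσmul : ∀ x y, σ (x * y) = σ y * σ x)
    (ε : D) (hε : ε = 1 ∨ ε = -1)
    (B : V →ₗ[ℝ] V →ₗ[ℝ] D)
    (hherm : ∀ u v : V, B v u = ε * σ (B u v))
    (X H Y : Module.End ℝ V)
    (hHX : ⁅H, X⁆ = (2 : ℝ) • X) (hHY : ⁅H, Y⁆ = -((2 : ℝ) • Y)) (hXY : ⁅X, Y⁆ = H)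
    (hskewX : ∀ u v : V, B (X u) v + B u (X v) = 0)
    (hskewH : ∀ u v : V, B (H u) v + B u (H v) = 0)
    (hskewY : ∀ u v : V, B (Y u) v + B u (Y v) = 0)
    (d : ℕ) (hd : 1 ≤ d) (u v : V)
    (huY : Y u = 0) (huH : H u = ((1 : ℝ) - d) • u)
    (hvY : Y v = 0) (hvH : H v = ((1 : ℝ) - d) • v) :
    B v ((X ^ (d - 1)) u) = ε * (-1) ^ (d - 1) * σ (B u ((X ^ (d - 1)) v)) := by
  have key : ∀ n : ℕ, ∀ a b : V, B a ((X ^ n) b) = (-1 : D) ^ n * B ((X ^ n) a) b := by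
    intro n
    induction n with
    | zero => simp
    | succ n ih =>
      intro a b
      have h1 : (X ^ (n + 1)) b = (X ^ n) (X b) := by
        rw [pow_succ]; rfl
      have h2 : (X ^ (n + 1)) a = X ((X ^ n) a) := by
        rw [pow_succ']; rfl
      have h3 : B ((X ^ n) a) (X b) = -B (X ((X ^ n) a)) b :=
        eq_neg_of_add_eq_zero_right (hskewX ((X ^ n) a) b)
      rw [h1, ih, h3, h2, pow_succ, mul_neg, mul_assoc, neg_one_mul, mul_neg]
  rw [key (d - 1) v u, hherm u ((X ^ (d - 1)) v)]
  rw [← mul_assoc, ((Commute.neg_one_left ε).pow_left (d - 1)).eq]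
end

section
/- Let {X, H, Y} be an sl_2(ℝ)-triple in su(V, ⟨·,·⟩). Then the form (u, v)_d := ⟨u, X^{d-1} v⟩ restricted to L(d-1) is nondegenerate. -/
/-- A submodule is invariant under the three operators `X`, `H`, `Y`. -/
def SL2Invariant {V : Type*} [AddCommGroup V] [Module ℝ V]
    (X H Y : Module.End ℝ V) (A : Submodule ℝ V) : Prop :=
  A.map X ≤ A ∧ A.map H ≤ A ∧ A.map Y ≤ A

/-- A nonzero invariant submodule with no nontrivial proper invariant submodule. -/
def SL2Irreducible {V : Type*} [AddCommGroup V] [Module ℝ V]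
    (X H Y : Module.End ℝ V) (A : Submodule ℝ V) : Prop :=
  A ≠ ⊥ ∧ ∀ B ≤ A, SL2Invariant X H Y B → B = ⊥ ∨ B = A

/-- `M(d-1)`: the isotypical component, the sum of all `d`-dimensional irreducible invariant
submodules of `V`. -/
def isotypical {V : Type*} [AddCommGroup V] [Module ℝ V]
    (X H Y : Module.End ℝ V) (d : ℕ) : Submodule ℝ V :=
  sSup {A : Submodule ℝ V |
    SL2Invariant X H Y A ∧ SL2Irreducible X H Y A ∧ Module.finrank ℝ A = d}

open Module LinearMap

namespace SL2Aux

variable {V : Type*} [AddCommGroup V] [Module ℝ V]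

section Chains

variable {X H Y : Module.End ℝ V}
variable (hx : ∀ v, H (X v) = X (H v) + (2:ℝ) • X v)
variable (hy : ∀ v, H (Y v) = Y (H v) - (2:ℝ) • Y v)
variable (hxy : ∀ v, X (Y v) = Y (X v) + H v)

lemma pow_apply_succ (T : Module.End ℝ V) (m : ℕ) (v : V) :
    (T^(m+1)) v = (T^m) (T v) := by rw [pow_succ]; rfl

lemma pow_apply_succ' (T : Module.End ℝ V) (m : ℕ) (v : V) :
    (T^(m+1)) v = T ((T^m) v) := by rw [pow_succ']; rfl

lemma pow_apply_add (T : Module.End ℝ V) (i j : ℕ) (v : V) :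
    (T^(i+j)) v = (T^i) ((T^j) v) := by rw [pow_add]; rfl

include hx in
lemma LH : ∀ (m : ℕ) (v : V), H ((X^m) v) = (X^m) (H v) + ((2*m:ℝ)) • (X^m) v := by
  intro m
  induction m with
  | zero => intro v; simp
  | succ m ih =>
    intro v
    rw [pow_apply_succ, ih (X v), hx v, map_add, map_smul, ← pow_apply_succ, ← pow_apply_succ]
    push_cast
    module

include hy in
lemma LHY : ∀ (m : ℕ) (v : V), H ((Y^m) v) = (Y^m) (H v) - ((2*m:ℝ)) • (Y^m) v := by
  intro m
  induction m with
  | zero => intro v; simp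
  | succ m ih =>
    intro v
    rw [pow_apply_succ, ih (Y v), hy v, map_sub, map_smul, ← pow_apply_succ, ← pow_apply_succ]
    push_cast
    module

include hx hxy in
lemma LY : ∀ (m : ℕ) (v : V), Y ((X^(m+1)) v) =
    (X^(m+1)) (Y v) - ((m+1:ℝ)) • (X^m) (H v) - (((m+1)*m : ℝ)) • (X^m) v := by
  intro m
  have key : ∀ v : V, Y (X v) = X (Y v) - H v := by
    intro v; rw [eq_sub_iff_add_eq, ← hxy v]
  induction m with
  | zero =>
    intro v
    simp only [zero_add, pow_one, pow_zero, Module.End.one_apply, key v]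
    push_cast
    module
  | succ m ih =>
    intro v
    rw [pow_apply_succ, ih (X v), key v, hx v, map_sub, map_add, map_smul,
      ← pow_apply_succ, ← pow_apply_succ, ← pow_apply_succ]
    push_cast
    module

/-- Eventual vanishing for chains of generalized eigenvectors (order ≤ 2) with distinct
eigenvalues. -/
lemma ev2 [FiniteDimensional ℝ V] (H : Module.End ℝ V) (c : ℕ → V) (μ : ℕ → ℝ)
    (hμ : Function.Injective μ)
    (h : ∀ k, (((H - μ k • 1 : Module.End ℝ V))^2) (c k) = 0) : ∃ m, c m = 0 := by
  by_contra hc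
  push_neg at hc
  have hmem : ∀ k, c k ∈ H.genEigenspace (μ k) (2:ℕ) := by
    intro k
    rw [Module.End.mem_genEigenspace_nat]
    exact h k
  have hind : iSupIndep ((H.genEigenspace · ((2:ℕ):ℕ∞)) ∘ μ) :=
    (H.independent_genEigenspace (2:ℕ)).comp hμ
  have hli : LinearIndependent ℝ c := hind.linearIndependent _ hmem hc
  have hli2 : LinearIndependent ℝ (fun k : Fin (Module.finrank ℝ V + 1) => c k) :=
    hli.comp (fun k : Fin (Module.finrank ℝ V + 1) => (k:ℕ)) Fin.val_injective
  have := hli2.fintype_card_le_finrank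
  simp [Fintype.card_fin] at this

/-- Fitting style decomposition. -/
lemma fitting [FiniteDimensional ℝ V] (g : Module.End ℝ V) (v : V) :
    ∃ x y, v = x + y ∧ (g ^ (Module.finrank ℝ V + 1)) x = 0 ∧
      y ∈ LinearMap.range (g ^ (Module.finrank ℝ V + 1)) := by
  set n := Module.finrank ℝ V + 1 with hn
  have hker : LinearMap.ker (g ^ n) = LinearMap.ker (g ^ (n + n)) := by
    have e1 := Module.End.ker_pow_eq_ker_pow_finrank_of_le (f := g) (m := n) (by omega)
    have e2 := Module.End.ker_pow_eq_ker_pow_finrank_of_le (f := g) (m := n + n) (by omega)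
    rw [e1, e2]
  have hdisj : Disjoint (LinearMap.ker (g ^ n)) (LinearMap.range (g ^ n)) := by
    rw [Submodule.disjoint_def]
    rintro x hx ⟨z, rfl⟩
    have : z ∈ LinearMap.ker (g ^ (n + n)) := by
      rw [LinearMap.mem_ker, pow_add, Module.End.mul_apply]
      exact hx
    rw [← hker, LinearMap.mem_ker] at this
    exact this
  have htop : LinearMap.ker (g ^ n) ⊔ LinearMap.range (g ^ n) = ⊤ := by
    apply Submodule.eq_top_of_finrank_eq
    have h1 := Submodule.finrank_sup_add_finrank_inf_eq
      (LinearMap.ker (g ^ n)) (LinearMap.range (g ^ n))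
    rw [hdisj.eq_bot] at h1
    simp only [finrank_bot, add_zero] at h1
    have h2 := LinearMap.finrank_range_add_finrank_ker (g ^ n)
    omega
  have : v ∈ LinearMap.ker (g ^ n) ⊔ LinearMap.range (g ^ n) := htop ▸ Submodule.mem_top
  obtain ⟨x, hx, y, hy, rfl⟩ := Submodule.mem_sup.mp this
  exact ⟨x, y, rfl, hx, hy⟩

include hx hxy in
/-- A chain of `H`-eigenvectors under `X` must terminate, and the point of termination
satisfies an eigenvalue equation. -/
lemma min_chain [FiniteDimensional ℝ V] (lam : ℝ) (v : V) (hv : v ≠ 0) (hYv : Y v = 0)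
    (hHv : H v = lam • v) :
    ∃ m : ℕ, ((m+1:ℝ))*(lam + m) = 0 ∧ (X^(m+1)) v = 0 ∧ ∀ k ≤ m, (X^k) v ≠ 0 := by
  classical
  have heig : ∀ k : ℕ, H ((X^k) v) = (lam + 2*k) • (X^k) v := by
    intro k
    rw [LH hx k v, hHv, map_smul]
    module
  have hev : ∃ m, (X^m) v = 0 := by
    apply ev2 H (fun k => (X^k) v) (fun k => lam + 2*k)
    · intro k l hkl
      simp only at hkl
      have : (k:ℝ) = l := by linarith
      exact_mod_cast this
    · intro k
      have h1 : ((H - (lam + 2*(k:ℝ)) • (1 : Module.End ℝ V))) ((X^k) v) = 0 := by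
        simp only [LinearMap.sub_apply, LinearMap.smul_apply, Module.End.one_apply, heig k,
          sub_self]
      rw [sq, Module.End.mul_apply, h1, map_zero]
  have h0 : (X^0) v ≠ 0 := by simpa using hv
  have hm₀pos : 1 ≤ Nat.find hev := by
    rcases Nat.eq_zero_or_pos (Nat.find hev) with h | h
    · exact absurd (h ▸ Nat.find_spec hev) h0
    · exact h
  obtain ⟨m, hm⟩ : ∃ m, Nat.find hev = m + 1 := ⟨Nat.find hev - 1, by omega⟩
  have hspec : (X^(m+1)) v = 0 := hm ▸ Nat.find_spec hev
  refine ⟨m, ?_, hspec, fun k hk => Nat.find_min hev (by omega)⟩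
  have hzero : Y ((X^(m+1)) v) = 0 := by rw [hspec, map_zero]
  rw [LY hx hxy m v, hYv, map_zero, hHv, map_smul] at hzero
  have hXm : (X^m) v ≠ 0 := Nat.find_min hev (by omega)
  have hneg : (-((m+1:ℝ)*(lam + m))) • (X^m) v = 0 := by
    rw [← hzero]; module
  rcases smul_eq_zero.mp hneg with h | h
  · linarith [neg_eq_zero.mp h]
  · exact absurd h hXm


include hx hxy in
lemma lowest_chain [FiniteDimensional ℝ V] (d : ℕ) (hd : 1 ≤ d) (w : V) (hYw : Y w = 0)
    (hHw : H w = (1-(d:ℝ)) • w) :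
    (X^d) w = 0 ∧ (w ≠ 0 → ∀ k, k < d → (X^k) w ≠ 0) := by
  by_cases hw : w = 0
  · subst hw; simp
  obtain ⟨m, hcoef, hXm1, hXk⟩ := min_chain hx hxy (1-(d:ℝ)) w hw hYw hHw
  have hmd : m + 1 = d := by
    have h1 : (m:ℝ)+1 ≠ 0 := by positivity
    have h2 : (1-(d:ℝ)) + m = 0 := by
      rcases mul_eq_zero.mp hcoef with h|h
      · exact absurd h h1
      · exact h
    have h3 : (m:ℝ)+1 = d := by linarith
    exact_mod_cast h3
  constructor
  · rw [← hmd]; exact hXm1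
  · intro _ k hk; exact hXk k (by omega)

include hx hxy in
lemma no_high [FiniteDimensional ℝ V] (d : ℕ) (v : V) (hYv : Y v = 0)
    (hHv : H v = (1+(d:ℝ)) • v) : v = 0 := by
  by_contra hv
  obtain ⟨m, hcoef, -, -⟩ := min_chain hx hxy (1+(d:ℝ)) v hv hYv hHv
  have : (0:ℝ) < ((m:ℝ)+1)*((1+(d:ℝ)) + m) := by positivity
  linarith

include hx hy hxy in
lemma pair [FiniteDimensional ℝ V] (d : ℕ) (hd : 1 ≤ d) (v w : V)
    (hYv : Y v = 0) (hYw : Y w = 0) (hHw : H w = (1-(d:ℝ)) • w)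
    (hHv : H v = (1-(d:ℝ)) • v + w) : w = 0 := by
  classical
  by_contra hw
  have hv : v ≠ 0 := by
    rintro rfl
    apply hw
    have := hHv.symm
    simpa using this
  obtain ⟨hXd, hXne⟩ := lowest_chain hx hxy d hd w hYw hHw
  have hXd1 : (X^(d-1)) w ≠ 0 := hXne hw (d-1) (by omega)
  have heig2 : ∀ k:ℕ, (((H - ((1-(d:ℝ)) + 2*k) • (1:Module.End ℝ V)))^2) ((X^k) v) = 0 := by
    intro k
    have e1 : (H - ((1-(d:ℝ)) + 2*k) • (1:Module.End ℝ V)) ((X^k) v) = (X^k) w := by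
      simp only [LinearMap.sub_apply, LinearMap.smul_apply, Module.End.one_apply]
      rw [LH hx k v, hHv, map_add, map_smul]
      module
    have e2 : (H - ((1-(d:ℝ)) + 2*k) • (1:Module.End ℝ V)) ((X^k) w) = 0 := by
      simp only [LinearMap.sub_apply, LinearMap.smul_apply, Module.End.one_apply]
      rw [LH hx k w, hHw, map_smul]
      module
    rw [sq, Module.End.mul_apply, e1, e2]
  have hev : ∃ m, (X^m) v = 0 := by
    apply ev2 H (fun k => (X^k) v) (fun k => (1-(d:ℝ)) + 2*k) ?_ heig2
    intro k l hkl
    simp only at hkl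
    have : (k:ℝ) = l := by linarith
    exact_mod_cast this
  have h0 : (X^0) v ≠ 0 := by simpa using hv
  have hm₀pos : 1 ≤ Nat.find hev := by
    rcases Nat.eq_zero_or_pos (Nat.find hev) with h | h
    · exact absurd (h ▸ Nat.find_spec hev) h0
    · exact h
  obtain ⟨m, hm⟩ : ∃ m, Nat.find hev = m + 1 := ⟨Nat.find hev - 1, by omega⟩
  have hspec : (X^(m+1)) v = 0 := hm ▸ Nat.find_spec hev
  have hmin : ∀ k, k ≤ m → (X^k) v ≠ 0 := fun k hk => Nat.find_min hev (by omega)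
  have hzero : Y ((X^(m+1)) v) = 0 := by rw [hspec, map_zero]
  rw [LY hx hxy m v, hYv, map_zero, hHv, map_add, map_smul] at hzero
  have hneg : (-((m:ℝ)+1)) • ((((m:ℝ)+1-(d:ℝ))) • (X^m) v + (X^m) w) = 0 := by
    rw [← hzero]; module
  have hrel : (((m:ℝ)+1-(d:ℝ))) • (X^m) v + (X^m) w = 0 := by
    rcases smul_eq_zero.mp hneg with h | h
    · exfalso
      have : (m:ℝ)+1 = 0 := by linarith [neg_eq_zero.mp h]
      have : (0:ℝ) < (m:ℝ)+1 := by positivity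
      linarith
    · exact h
  rcases lt_trichotomy (m+1) d with hlt | heq | hgt
  · -- apply X^(d-1-m) to the relation
    apply hXd1
    have happ := congrArg (fun z => (X^(d-1-m)) z) hrel
    simp only [map_add, map_smul, map_zero] at happ
    rw [← pow_apply_add X (d-1-m) m v, ← pow_apply_add X (d-1-m) m w] at happ
    have hdm : d-1-m+m = d-1 := by omega
    rw [hdm] at happ
    have hXv0 : (X^(d-1)) v = 0 := by
      have hsplit : d-1 = (d-1-(m+1)) + (m+1) := by omega
      rw [hsplit, pow_apply_add, hspec, map_zero]
    rw [hXv0, smul_zero, zero_add] at happ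
    exact happ
  · apply hXd1
    have hc0 : ((m:ℝ)+1-(d:ℝ)) = 0 := by
      have : ((m:ℝ)+1) = d := by exact_mod_cast heq
      linarith
    rw [hc0, zero_smul, zero_add] at hrel
    have : m = d - 1 := by omega
    rw [← this]
    exact hrel
  · have hXw0 : (X^m) w = 0 := by
      have hsplit : m = (m-d) + d := by omega
      rw [hsplit, pow_apply_add, hXd, map_zero]
    rw [hXw0, add_zero] at hrel
    rcases smul_eq_zero.mp hrel with h | h
    · have : ((d:ℝ)) < (m:ℝ)+1 := by exact_mod_cast hgt
      linarith
    · exact hmin m le_rfl h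

include hy in
lemma kerY_H (v : V) (hv : Y v = 0) : Y (H v) = 0 := by
  have := hy v
  rw [hv, map_zero, smul_zero, sub_zero] at this
  exact this.symm

include hy in
lemma kerY_poly (t : ℝ) : ∀ (m : ℕ) (v : V), Y v = 0 →
    Y (((H - t • (1:Module.End ℝ V))^m) v) = 0 := by
  intro m
  induction m with
  | zero => intro v hv; simpa using hv
  | succ m ih =>
    intro v hv
    rw [pow_apply_succ]
    apply ih
    simp only [LinearMap.sub_apply, LinearMap.smul_apply, Module.End.one_apply, map_sub, map_smul,
      hv, kerY_H hy v hv, smul_zero, sub_zero]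

include hx hy hxy in
lemma ker_pow_b [FiniteDimensional ℝ V] (d : ℕ) : ∀ (j : ℕ) (v : V), Y v = 0 →
    ((H - (1+(d:ℝ)) • (1:Module.End ℝ V))^j) v = 0 → v = 0 := by
  intro j
  induction j with
  | zero => intro v _ hz; simpa using hz
  | succ j ih =>
    intro v hYv hz
    set v' := ((H - (1+(d:ℝ)) • (1:Module.End ℝ V))^j) v with hv'
    have hYv' : Y v' = 0 := kerY_poly hy _ j v hYv
    have hv'' : (H - (1+(d:ℝ)) • (1:Module.End ℝ V)) v' = 0 := by
      rw [hv', ← pow_apply_succ']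
      exact hz
    have hHv' : H v' = (1+(d:ℝ)) • v' := by
      have := hv''
      simp only [LinearMap.sub_apply, LinearMap.smul_apply, Module.End.one_apply,
        sub_eq_zero] at this
      exact this
    have : v' = 0 := no_high hx hxy d v' hYv' hHv'
    exact ih v hYv this

include hx hy hxy in
lemma ker_pow_a [FiniteDimensional ℝ V] (d : ℕ) (hd : 1 ≤ d) : ∀ (j : ℕ) (v : V), Y v = 0 →
    ((H - (1-(d:ℝ)) • (1:Module.End ℝ V))^j) v = 0 → H v = (1-(d:ℝ)) • v := by
  intro j
  induction j with
  | zero =>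
    intro v _ hz
    have : v = 0 := by simpa using hz
    rw [this]; simp
  | succ j ih =>
    intro v hYv hz
    set w := (H - (1-(d:ℝ)) • (1:Module.End ℝ V)) v with hwdef
    have hYw : Y w = 0 := by
      simp only [hwdef, LinearMap.sub_apply, LinearMap.smul_apply, Module.End.one_apply, map_sub,
        map_smul, hYv, kerY_H hy v hYv, smul_zero, sub_zero]
    have hjw : ((H - (1-(d:ℝ)) • (1:Module.End ℝ V))^j) w = 0 := by
      rw [hwdef, ← pow_apply_succ]
      exact hz
    have hHw : H w = (1-(d:ℝ)) • w := ih w hYw hjw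
    have hHv : H v = (1-(d:ℝ)) • v + w := by
      rw [hwdef]
      simp only [LinearMap.sub_apply, LinearMap.smul_apply, Module.End.one_apply]
      module
    have hw0 : w = 0 := pair hx hy hxy d hd v w hYv hYw hHw hHv
    rw [hHv, hw0, add_zero]


variable (X H Y) in
/-- The Casimir operator. -/
def Cas : Module.End ℝ V := H*H - (2:ℝ)•H + (4:ℝ)•(X*Y)

lemma Cas_apply (v : V) : Cas X H Y v = H (H v) - (2:ℝ) • H v + (4:ℝ) • X (Y v) := by
  simp [Cas, Module.End.mul_apply]

include hy hxy in
lemma CasY (v : V) : Cas X H Y (Y v) = Y (Cas X H Y v) := by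
  simp only [Cas_apply, map_add, map_sub, map_smul, hy, hxy]
  module

include hx hy in
lemma CasH (v : V) : Cas X H Y (H v) = H (Cas X H Y v) := by
  simp only [Cas_apply, map_add, map_sub, map_smul, hx, hy]
  module

lemma pow_comm_apply {S T : Module.End ℝ V} (h : ∀ v, S (T v) = T (S v)) (n : ℕ) (v : V) :
    (S^n) (T v) = T ((S^n) v) := by
  induction n with
  | zero => simp
  | succ n ih => rw [pow_apply_succ', ih, h, pow_apply_succ']

include hy hxy in
lemma CascY (d : ℕ) (v : V) :
    (Cas X H Y - ((d:ℝ)^2-1) • (1:Module.End ℝ V)) (Y v) =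
      Y ((Cas X H Y - ((d:ℝ)^2-1) • (1:Module.End ℝ V)) v) := by
  simp only [LinearMap.sub_apply, LinearMap.smul_apply, Module.End.one_apply, map_sub, map_smul,
    CasY hy hxy]

include hx hy in
lemma CascE (d : ℕ) (t : ℝ) (v : V) :
    (Cas X H Y - ((d:ℝ)^2-1) • (1:Module.End ℝ V)) ((H - t • (1:Module.End ℝ V)) v) =
      (H - t • (1:Module.End ℝ V)) ((Cas X H Y - ((d:ℝ)^2-1) • (1:Module.End ℝ V)) v) := by
  simp only [LinearMap.sub_apply, LinearMap.smul_apply, Module.End.one_apply, map_sub, map_smul,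
    CasH hx hy]
  module

include hy in
lemma kerY_lin (t : ℝ) (v : V) (hv : Y v = 0) : Y ((H - t • (1:Module.End ℝ V)) v) = 0 := by
  simp only [LinearMap.sub_apply, LinearMap.smul_apply, Module.End.one_apply, map_sub, map_smul,
    hv, kerY_H hy v hv, smul_zero, sub_zero]

include hx in
lemma Casc_kerY (d : ℕ) (v : V) (hv : Y v = 0) :
    (Cas X H Y - ((d:ℝ)^2-1) • (1:Module.End ℝ V)) v =
      (H - (1-(d:ℝ)) • (1:Module.End ℝ V)) ((H - (1+(d:ℝ)) • (1:Module.End ℝ V)) v) := by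
  simp only [LinearMap.sub_apply, LinearMap.smul_apply, Module.End.one_apply, Cas_apply,
    map_sub, map_smul, hv, smul_zero, map_zero]
  match_scalars <;> ring

lemma lin_comm (s t : ℝ) (v : V) :
    (H - s • (1:Module.End ℝ V)) ((H - t • (1:Module.End ℝ V)) v) =
      (H - t • (1:Module.End ℝ V)) ((H - s • (1:Module.End ℝ V)) v) := by
  simp only [LinearMap.sub_apply, LinearMap.smul_apply, Module.End.one_apply, map_sub, map_smul]
  module

include hx hy hxy in
lemma kerY_K_weight [FiniteDimensional ℝ V] (d : ℕ) (hd : 1 ≤ d) :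
    ∀ (j : ℕ) (v : V), Y v = 0 →
      ((Cas X H Y - ((d:ℝ)^2-1) • (1:Module.End ℝ V))^j) v = 0 →
      H v = (1-(d:ℝ)) • v := by
  have main : ∀ (j : ℕ) (v : V), Y v = 0 →
      ((Cas X H Y - ((d:ℝ)^2-1) • (1:Module.End ℝ V))^j) v = 0 →
      ((H - (1-(d:ℝ)) • (1:Module.End ℝ V))^j) v = 0 := by
    intro j
    induction j with
    | zero => intro v _ hz; simpa using hz
    | succ j ih =>
      intro v hYv hz
      set v' := (Cas X H Y - ((d:ℝ)^2-1) • (1:Module.End ℝ V)) v with hv'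
      have hYv' : Y v' = 0 := by
        rw [hv', Casc_kerY hx d v hYv]
        exact kerY_lin hy _ _ (kerY_lin hy _ _ hYv)
      have hz' : ((Cas X H Y - ((d:ℝ)^2-1) • (1:Module.End ℝ V))^j) v' = 0 := by
        rw [hv', ← pow_apply_succ]
        exact hz
      have ihv := ih v' hYv' hz'
      rw [hv', Casc_kerY hx d v hYv, ← pow_apply_succ] at ihv
      -- ihv : ((H-a)^(j+1)) ((H-b) v) = 0
      have hswap : ((H - (1-(d:ℝ)) • (1:Module.End ℝ V))^(j+1))
          ((H - (1+(d:ℝ)) • (1:Module.End ℝ V)) v) =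
          (H - (1+(d:ℝ)) • (1:Module.End ℝ V))
            (((H - (1-(d:ℝ)) • (1:Module.End ℝ V))^(j+1)) v) :=
        pow_comm_apply (fun x => lin_comm (1-(d:ℝ)) (1+(d:ℝ)) x) (j+1) v
      rw [hswap] at ihv
      set z := ((H - (1-(d:ℝ)) • (1:Module.End ℝ V))^(j+1)) v with hzdef
      have hYz : Y z = 0 := kerY_poly hy _ (j+1) v hYv
      have hHz : H z = (1+(d:ℝ)) • z := by
        have := ihv
        simp only [LinearMap.sub_apply, LinearMap.smul_apply, Module.End.one_apply,
          sub_eq_zero] at this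
        exact this
      exact no_high hx hxy d z hYz hHz
  intro j v hYv hz
  exact ker_pow_a hx hy hxy d hd j v hYv (main j v hYv hz)

include hx hy hxy in
lemma no_low [FiniteDimensional ℝ V] (d : ℕ) (hd : 1 ≤ d) (n : ℕ) (z : V)
    (hz : ((Cas X H Y - ((d:ℝ)^2-1) • (1:Module.End ℝ V))^n) z = 0)
    (hHz : H z = (-1-(d:ℝ)) • z) : z = 0 := by
  classical
  by_contra hz0
  have heig : ∀ k : ℕ, H ((Y^k) z) = (-1-(d:ℝ) - 2*k) • (Y^k) z := by
    intro k
    rw [LHY hy k z, hHz, map_smul]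
    module
  have hev : ∃ l, (Y^l) z = 0 := by
    apply ev2 H (fun k => (Y^k) z) (fun k => -1-(d:ℝ) - 2*k)
    · intro k l hkl
      simp only at hkl
      have : (k:ℝ) = l := by linarith
      exact_mod_cast this
    · intro k
      have h1 : ((H - (-1-(d:ℝ) - 2*(k:ℝ)) • (1 : Module.End ℝ V))) ((Y^k) z) = 0 := by
        simp only [LinearMap.sub_apply, LinearMap.smul_apply, Module.End.one_apply, heig k,
          sub_self]
      rw [sq, Module.End.mul_apply, h1, map_zero]
  have h0 : (Y^0) z ≠ 0 := by simpa using hz0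
  have hlpos : 1 ≤ Nat.find hev := by
    rcases Nat.eq_zero_or_pos (Nat.find hev) with h | h
    · exact absurd (h ▸ Nat.find_spec hev) h0
    · exact h
  obtain ⟨l, hl⟩ : ∃ l, Nat.find hev = l + 1 := ⟨Nat.find hev - 1, by omega⟩
  have hspec : (Y^(l+1)) z = 0 := hl ▸ Nat.find_spec hev
  set z'' := (Y^l) z with hz''
  have hz''ne : z'' ≠ 0 := Nat.find_min hev (by omega)
  have hYz'' : Y z'' = 0 := by rw [hz'', ← pow_apply_succ']; exact hspec
  have hKz'' : ((Cas X H Y - ((d:ℝ)^2-1) • (1:Module.End ℝ V))^n) z'' = 0 := by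
    rw [hz'']
    have hcomm : ∀ v, (Y^l) (((Cas X H Y - ((d:ℝ)^2-1) • (1:Module.End ℝ V))^n) v) =
        ((Cas X H Y - ((d:ℝ)^2-1) • (1:Module.End ℝ V))^n) ((Y^l) v) := by
      intro v
      exact pow_comm_apply (fun x => (pow_comm_apply (CascY hy hxy d) n x).symm) l v
    rw [← hcomm, hz, map_zero]
  have hHz'' : H z'' = (-1-(d:ℝ) - 2*l) • z'' := heig l
  have hfin : H z'' = (1-(d:ℝ)) • z'' := kerY_K_weight hx hy hxy d hd n z'' hYz'' hKz''
  have : ((-1-(d:ℝ) - 2*l) - (1-(d:ℝ))) • z'' = 0 := by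
    rw [sub_smul, ← hHz'', ← hfin, sub_self]
  rcases smul_eq_zero.mp this with h | h
  · have hll : (0:ℝ) ≤ l := Nat.cast_nonneg l
    have : (-2:ℝ) - 2*l = 0 := by linarith
    linarith
  · exact hz''ne h

include hx hy hxy in
lemma gen_low_zero [FiniteDimensional ℝ V] (d : ℕ) (hd : 1 ≤ d) (n : ℕ) :
    ∀ (j : ℕ) (z : V), ((Cas X H Y - ((d:ℝ)^2-1) • (1:Module.End ℝ V))^n) z = 0 →
      ((H - (-1-(d:ℝ)) • (1:Module.End ℝ V))^j) z = 0 → z = 0 := by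
  intro j
  induction j with
  | zero => intro z _ hz; simpa using hz
  | succ j ih =>
    intro z hK hz
    set z' := ((H - (-1-(d:ℝ)) • (1:Module.End ℝ V))^j) z with hz'
    have hKz' : ((Cas X H Y - ((d:ℝ)^2-1) • (1:Module.End ℝ V))^n) z' = 0 := by
      rw [hz', ← pow_comm_apply (fun x => (pow_comm_apply (CascE hx hy d (-1-(d:ℝ))) n x).symm) j z,
        hK, map_zero]
    have hlin : (H - (-1-(d:ℝ)) • (1:Module.End ℝ V)) z' = 0 := by
      rw [hz', ← pow_apply_succ']
      exact hz
    have hHz' : H z' = (-1-(d:ℝ)) • z' := by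
      simp only [LinearMap.sub_apply, LinearMap.smul_apply, Module.End.one_apply,
        sub_eq_zero] at hlin
      exact hlin
    have : z' = 0 := no_low hx hy hxy d hd n z' hKz' hHz'
    exact ih z hK this

include hx hy hxy in
lemma K_low [FiniteDimensional ℝ V] (d : ℕ) (hd : 1 ≤ d) (n j : ℕ) (v : V)
    (hK : ((Cas X H Y - ((d:ℝ)^2-1) • (1:Module.End ℝ V))^n) v = 0)
    (hvH : ((H - (1-(d:ℝ)) • (1:Module.End ℝ V))^j) v = 0) :
    Y v = 0 ∧ H v = (1-(d:ℝ)) • v := by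
  have hshift : ∀ (m : ℕ) (x : V), ((H - (-1-(d:ℝ)) • (1:Module.End ℝ V))^m) (Y x) =
      Y (((H - (1-(d:ℝ)) • (1:Module.End ℝ V))^m) x) := by
    intro m
    induction m with
    | zero => intro x; simp
    | succ m ih =>
      intro x
      have hstep : (H - (-1-(d:ℝ)) • (1:Module.End ℝ V)) (Y x) =
          Y ((H - (1-(d:ℝ)) • (1:Module.End ℝ V)) x) := by
        simp only [LinearMap.sub_apply, LinearMap.smul_apply, Module.End.one_apply, map_sub,
          map_smul, hy x]
        module
      rw [pow_apply_succ, hstep, ih ((H - (1-(d:ℝ)) • (1:Module.End ℝ V)) x), ← pow_apply_succ]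
  have hYK : ((Cas X H Y - ((d:ℝ)^2-1) • (1:Module.End ℝ V))^n) (Y v) = 0 := by
    rw [pow_comm_apply (CascY hy hxy d) n v, hK, map_zero]
  have hYgen : ((H - (-1-(d:ℝ)) • (1:Module.End ℝ V))^j) (Y v) = 0 := by
    rw [hshift j v, hvH, map_zero]
  have hYv : Y v = 0 := gen_low_zero hx hy hxy d hd n j (Y v) hYK hYgen
  exact ⟨hYv, kerY_K_weight hx hy hxy d hd n v hYv hK⟩


include hx hy hxy in
lemma mem_isotypical [FiniteDimensional ℝ V] (d : ℕ) (hd : 1 ≤ d) (w : V) (hYw : Y w = 0)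
    (hHw : H w = (1-(d:ℝ)) • w) : w ∈ isotypical X H Y d := by
  classical
  by_cases hw : w = 0
  · rw [hw]; exact Submodule.zero_mem _
  obtain ⟨hXd, hXne'⟩ := lowest_chain hx hxy d hd w hYw hHw
  have hXne : ∀ k, k < d → (X^k) w ≠ 0 := hXne' hw
  have hXge : ∀ e, d ≤ e → (X^e) w = 0 := by
    intro e he
    have : e = (e-d) + d := by omega
    rw [this, pow_apply_add, hXd, map_zero]
  set b : Fin d → V := fun k => (X^(k:ℕ)) w with hb
  have heig : ∀ k : Fin d, H (b k) = ((1-(d:ℝ)) + 2*((k:ℕ):ℝ)) • b k := by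
    intro k
    rw [hb]
    simp only
    rw [LH hx (k:ℕ) w, hHw, map_smul]
    module
  have hlin : LinearIndependent ℝ b := by
    apply Module.End.eigenvectors_linearIndependent' H
      (fun k : Fin d => (1-(d:ℝ)) + 2*((k:ℕ):ℝ))
    · intro k l hkl
      simp only at hkl
      have : ((k:ℕ):ℝ) = ((l:ℕ):ℝ) := by linarith
      have : (k:ℕ) = (l:ℕ) := by exact_mod_cast this
      exact Fin.ext this
    · intro k
      exact ⟨Module.End.mem_eigenspace_iff.mpr (heig k), hXne (k:ℕ) k.isLt⟩
  set A : Submodule ℝ V := Submodule.span ℝ (Set.range b) with hA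
  have hwA : w ∈ A := by
    apply Submodule.subset_span
    exact ⟨⟨0, by omega⟩, by simp [hb]⟩
  have hmemb : ∀ k : Fin d, b k ∈ A := fun k => Submodule.subset_span ⟨k, rfl⟩
  have hinv : SL2Invariant X H Y A := by
    refine ⟨?_, ?_, ?_⟩
    · rw [hA, Submodule.map_span_le]
      rintro - ⟨k, rfl⟩
      have hXb : X (b k) = (X^((k:ℕ)+1)) w := by rw [hb]; simp only; rw [pow_apply_succ']
      rw [hXb]
      by_cases hkd : (k:ℕ)+1 < d
      · exact Submodule.subset_span ⟨⟨(k:ℕ)+1, hkd⟩, rfl⟩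
      · rw [hXge ((k:ℕ)+1) (by omega)]
        exact Submodule.zero_mem _
    · rw [hA, Submodule.map_span_le]
      rintro - ⟨k, rfl⟩
      rw [heig k]
      exact Submodule.smul_mem _ _ (hmemb k)
    · rw [hA, Submodule.map_span_le]
      rintro - ⟨k, rfl⟩
      rcases Nat.eq_zero_or_pos (k:ℕ) with hk0 | hkpos
      · have : b k = w := by rw [hb]; simp only [hk0]; simp
        rw [this, hYw]
        exact Submodule.zero_mem _
      · obtain ⟨m, hm⟩ : ∃ m, (k:ℕ) = m + 1 := ⟨(k:ℕ)-1, by omega⟩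
        have hYb : Y (b k) = (-(((m:ℝ)+1)*((1-(d:ℝ)) + m))) • (X^m) w := by
          rw [hb]; simp only [hm]
          rw [LY hx hxy m w, hYw, map_zero, hHw, map_smul]
          module
        rw [hYb]
        refine Submodule.smul_mem _ _ (Submodule.subset_span ⟨⟨m, by omega⟩, rfl⟩)
  have hrank : Module.finrank ℝ A = d := by
    rw [hA, finrank_span_eq_card hlin, Fintype.card_fin]
  have hirr : SL2Irreducible X H Y A := by
    constructor
    · intro hbot
      exact hw (by simpa [hbot] using hwA)
    · intro B hBA hBinv
      by_cases hB : B = ⊥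
      · exact Or.inl hB
      right
      obtain ⟨b', hb'B, hb'ne⟩ := (Submodule.ne_bot_iff B).mp hB
      have hBX : ∀ (j:ℕ) (x : V), x ∈ B → (X^j) x ∈ B := by
        intro j
        induction j with
        | zero => intro x hxB; simpa using hxB
        | succ j ih =>
          intro x hxB
          rw [pow_apply_succ']
          exact hBinv.1 ⟨(X^j) x, ih x hxB, rfl⟩
      have hBY : ∀ (j:ℕ) (x : V), x ∈ B → (Y^j) x ∈ B := by
        intro j
        induction j with
        | zero => intro x hxB; simpa using hxB
        | succ j ih =>
          intro x hxB
          rw [pow_apply_succ']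
          exact hBinv.2.2 ⟨(Y^j) x, ih x hxB, rfl⟩
      obtain ⟨cf, hcf⟩ := (Submodule.mem_span_range_iff_exists_fun ℝ).mp (hBA hb'B)
      have hcfex : ∃ k, cf k ≠ 0 := by
        by_contra hc
        push_neg at hc
        apply hb'ne
        rw [← hcf]
        simp [hc]
      set S : Finset (Fin d) := Finset.univ.filter (fun k => cf k ≠ 0) with hS
      have hSne : S.Nonempty := by
        obtain ⟨k, hk⟩ := hcfex
        exact ⟨k, by simp [hS, hk]⟩
      set k₀ := S.min' hSne with hk₀
      have hk₀S : k₀ ∈ S := S.min'_mem hSne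
      have hcfk₀ : cf k₀ ≠ 0 := by simpa [hS] using hk₀S
      have hlow : ∀ k : Fin d, k < k₀ → cf k = 0 := by
        intro k hk
        by_contra hkc
        exact absurd (S.min'_le k (by simp [hS, hkc])) (not_le.mpr hk)
      -- apply X^(d-1-k₀)
      have hkey : (X^(d-1-(k₀:ℕ))) b' = cf k₀ • (X^(d-1)) w := by
        rw [← hcf, map_sum]
        have hterm : ∀ k : Fin d, (X^(d-1-(k₀:ℕ))) (cf k • b k) =
            cf k • (X^(d-1-(k₀:ℕ)+(k:ℕ))) w := by
          intro k
          rw [map_smul, hb]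
          simp only
          rw [← pow_apply_add]
        rw [Finset.sum_congr rfl (fun k _ => hterm k)]
        rw [Finset.sum_eq_single k₀]
        · have : d-1-(k₀:ℕ)+(k₀:ℕ) = d-1 := by
            have := k₀.isLt
            omega
          rw [this]
        · intro k _ hkne
          rcases lt_or_gt_of_ne hkne with hlt | hgt
          · rw [hlow k hlt, zero_smul]
          · have : d ≤ d-1-(k₀:ℕ)+(k:ℕ) := by
              have h1 := k₀.isLt
              have h2 : (k₀:ℕ) < (k:ℕ) := hgt
              omega
            rw [hXge _ this, smul_zero]
        · intro h
          exact absurd (Finset.mem_univ k₀) h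
      have hXd1B : (X^(d-1)) w ∈ B := by
        have h1 : (X^(d-1-(k₀:ℕ))) b' ∈ B := hBX _ _ hb'B
        rw [hkey] at h1
        have := Submodule.smul_mem B (cf k₀)⁻¹ h1
        rwa [inv_smul_smul₀ hcfk₀] at this
      have hdown : ∀ j, j ≤ d-1 → ∃ C : ℝ, C ≠ 0 ∧ (Y^j) ((X^(d-1)) w) = C • (X^(d-1-j)) w := by
        intro j
        induction j with
        | zero => intro _; exact ⟨1, one_ne_zero, by simp⟩
        | succ j ih =>
          intro hj
          obtain ⟨C, hC, hCe⟩ := ih (by omega)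
          have hsplit : d-1-j = (d-2-j) + 1 := by omega
          have hYstep : Y ((X^(d-1-j)) w) =
              (-(((d:ℝ)-2-(j:ℝ)+1)*((1-(d:ℝ)) + ((d:ℝ)-2-(j:ℝ))))) • (X^(d-2-j)) w := by
            rw [hsplit]
            have hcast : ((d-2-j : ℕ):ℝ) = (d:ℝ)-2-(j:ℝ) := by
              rw [Nat.sub_sub, Nat.cast_sub (by omega : 2+j ≤ d)]
              push_cast
              ring
            rw [LY hx hxy (d-2-j) w, hYw, map_zero, hHw, map_smul, hcast]
            module
          refine ⟨(-(((d:ℝ)-2-(j:ℝ)+1)*((1-(d:ℝ)) + ((d:ℝ)-2-(j:ℝ))))) * C, ?_, ?_⟩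
          · apply mul_ne_zero _ hC
            have h1 : (d:ℝ)-2-(j:ℝ)+1 = (d:ℝ)-1-(j:ℝ) := by ring
            have h2 : (1-(d:ℝ)) + ((d:ℝ)-2-(j:ℝ)) = -1-(j:ℝ) := by ring
            rw [h1, h2]
            intro hzero
            have hj1 : (j:ℝ) + 1 ≤ (d:ℝ) - 1 := by
              have : j + 1 ≤ d - 1 := hj
              have h3 : ((j+1:ℕ):ℝ) ≤ ((d-1:ℕ):ℝ) := by exact_mod_cast this
              push_cast [Nat.cast_sub (by omega : 1 ≤ d)] at h3
              linarith
            have hjpos : (0:ℝ) ≤ (j:ℝ) := Nat.cast_nonneg j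
            nlinarith
          · rw [pow_apply_succ', hCe, map_smul, hYstep]
            have : d-2-j = d-1-(j+1) := by omega
            rw [this, smul_smul, mul_comm]
      obtain ⟨C, hC, hCe⟩ := hdown (d-1) le_rfl
      have hwB : w ∈ B := by
        have h1 : (Y^(d-1)) ((X^(d-1)) w) ∈ B := hBY _ _ hXd1B
        rw [hCe] at h1
        have h2 : d-1-(d-1) = 0 := by omega
        rw [h2, pow_zero, Module.End.one_apply] at h1
        have := Submodule.smul_mem B C⁻¹ h1
        rwa [inv_smul_smul₀ hC] at this
      apply le_antisymm hBA
      rw [hA, Submodule.span_le]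
      rintro - ⟨k, rfl⟩
      exact hBX (k:ℕ) w hwB
  have hle : A ≤ isotypical X H Y d := by
    unfold isotypical
    exact le_sSup ⟨hinv, hirr, hrank⟩
  exact hle hwA

end Chains

end SL2Aux


/-- Let `{X, H, Y}` be an `sl₂(ℝ)`-triple in `su(V, ⟨·,·⟩)` for a nondegenerate `ε`-`σ`
Hermitian form `⟨·,·⟩` with values in the ℝ-algebra `D`.  Then the form
`(u,v)_d := ⟨u, X^{d-1} v⟩` restricted to `L(d-1) = ker Y ∩ ker (H - (1-d)·id) ∩ M(d-1)`
is nondegenerate. -/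
theorem stmt16 {V D : Type*} [AddCommGroup V] [Module ℝ V] [FiniteDimensional ℝ V]
    [Ring D] [Algebra ℝ D]
    (σ : D →ₗ[ℝ] D) (hσinv : ∀ x, σ (σ x) = x) (hσmul : ∀ x y, σ (x * y) = σ y * σ x)
    (ε : D) (hε : ε = 1 ∨ ε = -1)
    (B : V →ₗ[ℝ] V →ₗ[ℝ] D)
    (hherm : ∀ u v : V, B v u = ε * σ (B u v))
    (hnondeg : ∀ u : V, (∀ w : V, B w u = 0) → u = 0)
    (X H Y : Module.End ℝ V)
    (hHX : ⁅H, X⁆ = (2 : ℝ) • X) (hHY : ⁅H, Y⁆ = -((2 : ℝ) • Y)) (hXY : ⁅X, Y⁆ = H)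
    (hskewX : ∀ u v : V, B (X u) v + B u (X v) = 0)
    (hskewH : ∀ u v : V, B (H u) v + B u (H v) = 0)
    (hskewY : ∀ u v : V, B (Y u) v + B u (Y v) = 0)
    (d : ℕ) (hd : 1 ≤ d) :
    ∀ u ∈ LinearMap.ker Y ⊓ LinearMap.ker (H - ((1 : ℝ) - d) • 1) ⊓ isotypical X H Y d,
      (∀ w ∈ LinearMap.ker Y ⊓ LinearMap.ker (H - ((1 : ℝ) - d) • 1) ⊓ isotypical X H Y d,
        B w ((X ^ (d - 1)) u) = 0) → u = 0 := by
  intro u hu hw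
  -- pointwise commutation relations
  have hx : ∀ v, H (X v) = X (H v) + (2:ℝ) • X v := by
    intro v
    have h := hHX
    rw [Ring.lie_def] at h
    have h2 := LinearMap.ext_iff.mp h v
    simp only [LinearMap.sub_apply, Module.End.mul_apply, LinearMap.smul_apply] at h2
    linear_combination (norm := module) h2
  have hy : ∀ v, H (Y v) = Y (H v) - (2:ℝ) • Y v := by
    intro v
    have h := hHY
    rw [Ring.lie_def] at h
    have h2 := LinearMap.ext_iff.mp h v
    simp only [LinearMap.sub_apply, Module.End.mul_apply, LinearMap.smul_apply,
      LinearMap.neg_apply] at h2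
    linear_combination (norm := module) h2
  have hxy : ∀ v, X (Y v) = Y (X v) + H v := by
    intro v
    have h := hXY
    rw [Ring.lie_def] at h
    have h2 := LinearMap.ext_iff.mp h v
    simp only [LinearMap.sub_apply, Module.End.mul_apply] at h2
    linear_combination (norm := module) h2
  -- membership data for u
  rw [Submodule.mem_inf] at hu
  obtain ⟨hu1, -⟩ := hu
  rw [Submodule.mem_inf] at hu1
  obtain ⟨huY, huH⟩ := hu1
  have hYu : Y u = 0 := LinearMap.mem_ker.mp huY
  have hHu : H u = (1-(d:ℝ)) • u := by
    have := LinearMap.mem_ker.mp huH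
    simp only [LinearMap.sub_apply, LinearMap.smul_apply, Module.End.one_apply,
      sub_eq_zero] at this
    exact this
  set ξ := (X ^ (d - 1)) u with hξ
  -- the pairing against elements of L'
  have hL' : ∀ x : V, Y x = 0 → H x = (1-(d:ℝ)) • x → B x ξ = 0 := by
    intro x hxY hxH
    apply hw
    rw [Submodule.mem_inf]
    refine ⟨?_, SL2Aux.mem_isotypical hx hy hxy d hd x hxY hxH⟩
    rw [Submodule.mem_inf]
    refine ⟨LinearMap.mem_ker.mpr hxY, LinearMap.mem_ker.mpr ?_⟩
    simp only [LinearMap.sub_apply, LinearMap.smul_apply, Module.End.one_apply, hxH, sub_self]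
  -- properties of ξ
  have hXdu : (X^d) u = 0 := (SL2Aux.lowest_chain hx hxy d hd u hYu hHu).1
  have hcast : ((d-1:ℕ):ℝ) = (d:ℝ)-1 := by
    rw [Nat.cast_sub hd]; simp
  have hHxi : H ξ = ((d:ℝ)-1) • ξ := by
    rw [hξ, SL2Aux.LH hx (d-1) u, hHu, map_smul, hcast]
    module
  have hXxi : X ξ = 0 := by
    rw [hξ, ← SL2Aux.pow_apply_succ']
    have : d - 1 + 1 = d := by omega
    rw [this, hXdu]
  -- skew-adjointness, pointwise rearranged
  have skewX : ∀ a b : V, B (X a) b = - B a (X b) := fun a b =>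
    eq_neg_of_add_eq_zero_left (hskewX a b)
  have skewH : ∀ a b : V, B (H a) b = - B a (H b) := fun a b =>
    eq_neg_of_add_eq_zero_left (hskewH a b)
  -- the two kill lemmas
  have kH : ∀ z : V, B ((H - (1-(d:ℝ)) • (1:Module.End ℝ V)) z) ξ = 0 := by
    intro z
    simp only [LinearMap.sub_apply, LinearMap.smul_apply, Module.End.one_apply]
    rw [map_sub, map_smul, LinearMap.sub_apply, LinearMap.smul_apply, skewH z ξ, hHxi, map_smul]
    module
  have kC : ∀ z : V, B ((SL2Aux.Cas X H Y - ((d:ℝ)^2-1) • (1:Module.End ℝ V)) z) ξ = 0 := by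
    intro z
    have e2 : B (H z) ξ = -(((d:ℝ)-1) • B z ξ) := by
      rw [skewH z ξ, hHxi, map_smul]
    have e1 : B (H (H z)) ξ = ((d:ℝ)-1) • (((d:ℝ)-1) • B z ξ) := by
      rw [skewH (H z) ξ, hHxi, map_smul, e2]
      module
    have e3 : B (X (Y z)) ξ = 0 := by
      rw [skewX (Y z) ξ, hXxi, map_zero, neg_zero]
    have expand : (SL2Aux.Cas X H Y - ((d:ℝ)^2-1) • (1:Module.End ℝ V)) z
        = H (H z) - (2:ℝ) • H z + (4:ℝ) • X (Y z) - ((d:ℝ)^2-1) • z := by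
      simp [SL2Aux.Cas_apply, LinearMap.sub_apply, LinearMap.smul_apply]
    rw [expand, map_sub, map_add, map_sub, map_smul, map_smul, map_smul]
    simp only [LinearMap.sub_apply, LinearMap.add_apply, LinearMap.smul_apply]
    rw [e1, e2, e3]
    module
  -- every vector pairs to zero with ξ
  have hall : ∀ v : V, B v ξ = 0 := by
    intro v
    obtain ⟨k, i, hv, hkK, hirange⟩ :=
      SL2Aux.fitting (SL2Aux.Cas X H Y - ((d:ℝ)^2-1) • (1:Module.End ℝ V)) v
    obtain ⟨z, hz⟩ := hirange
    have hBi : B i ξ = 0 := by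
      rw [← hz, SL2Aux.pow_apply_succ']
      exact kC _
    set K := LinearMap.ker ((SL2Aux.Cas X H Y - ((d:ℝ)^2-1) • (1:Module.End ℝ V)) ^
      (Module.finrank ℝ V + 1)) with hK
    have hkK' : k ∈ K := LinearMap.mem_ker.mpr hkK
    have hstab : ∀ x ∈ K, (H - (1-(d:ℝ)) • (1:Module.End ℝ V)) x ∈ K := by
      intro x hxK
      rw [hK, LinearMap.mem_ker] at hxK ⊢
      rw [SL2Aux.pow_comm_apply (SL2Aux.CascE hx hy d (1-(d:ℝ))) (Module.finrank ℝ V + 1) x,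
        hxK, map_zero]
    set g : Module.End ℝ K := (H - (1-(d:ℝ)) • (1:Module.End ℝ V)).restrict hstab with hg
    obtain ⟨xx, yy, hsum, hxzero, hyrange⟩ := SL2Aux.fitting g ⟨k, hkK'⟩
    have hgpow : ∀ (n : ℕ) (t : K), ((g^n) t : V) =
        (((H - (1-(d:ℝ)) • (1:Module.End ℝ V))^n) (t:V)) := by
      intro n t
      rw [hg, Module.End.pow_restrict n hstab]
      exact LinearMap.restrict_coe_apply _ _ _
    have hxV : ((H - (1-(d:ℝ)) • (1:Module.End ℝ V))^(Module.finrank ℝ K + 1)) (xx:V) = 0 := by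
      rw [← hgpow]
      rw [hxzero]
      rfl
    obtain ⟨hYx, hHx⟩ := SL2Aux.K_low hx hy hxy d hd (Module.finrank ℝ V + 1)
      (Module.finrank ℝ K + 1) (xx:V) (LinearMap.mem_ker.mp xx.2) hxV
    have hBx : B (xx:V) ξ = 0 := hL' _ hYx hHx
    have hBy : B (yy:V) ξ = 0 := by
      obtain ⟨zz, hzz⟩ := hyrange
      have hyV : (yy:V) = ((H - (1-(d:ℝ)) • (1:Module.End ℝ V))^(Module.finrank ℝ K + 1)) (zz:V) := by
        rw [← hgpow, hzz]
      rw [hyV, SL2Aux.pow_apply_succ']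
      exact kH _
    have hksum : k = (xx:V) + (yy:V) := by
      have := congrArg (Subtype.val) hsum
      simpa using this
    have hBk : B k ξ = 0 := by
      rw [hksum, map_add, LinearMap.add_apply, hBx, hBy, add_zero]
    rw [hv, map_add, LinearMap.add_apply, hBk, hBi, add_zero]
  have hxi0 : ξ = 0 := hnondeg ξ hall
  by_contra hu0
  exact (SL2Aux.lowest_chain hx hxy d hd u hYu hHu).2 hu0 (d-1) (by omega) hxi0
end
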